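/- arXiv:1909.03505 — 4 statements merged into one kernel-verified Lean document; each statement's English description precedes it below -/
import Mathlib

section
/- Suppose F = σ((B_j)_{j∈ℕ}) is generated by a sequence of sets B_j ∈ F, and for each n let π_n be the finite partition of Ω whose elements are the nonempty sets of the form ∩_{j=0}^n C_j with C_j ∈ {B_j, Ω \ B_j} (so that σ(π_n) = σ(B_0, …, B_n)). Then f_{π_n}(μ) := Σ_{A ∈ π_n, μ(A) > 0} 1_A · ν(A)/μ(A) converges μ-a.e. to dν^a/dμ as n → ∞. -/
open MeasureTheory Filter Set
open scoped ENNReal Topology Classical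

/-- The element of the partition `π_n` (generated by `B_0, …, B_n`) containing the point `x`:
the intersection `⋂_{j=0}^n C_j` where `C_j = B_j` if `x ∈ B_j` and `C_j = Ω \ B_j`
otherwise. -/
def cell {Ω : Type*} (B : ℕ → Set Ω) (n : ℕ) (x : Ω) : Set Ω :=
  ⋂ j ∈ Finset.range (n + 1), if x ∈ B j then B j else (B j)ᶜ

/-- The value at `x` of `f_{π_n}(μ) = Σ_{A ∈ π_n, μ(A) > 0} 1_A ⬝ ν(A)/μ(A)`, where `π_n` is the
partition of `Ω` into the nonempty sets of the form `⋂_{j=0}^n C_j`, `C_j ∈ {B_j, Ω \ B_j}`: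
this is `ν(A_x)/μ(A_x)` for `A_x` the cell of `π_n` containing `x`, if `μ(A_x) > 0`,
and `0` otherwise. -/
noncomputable def fPart {Ω : Type*} [MeasurableSpace Ω] (μ ν : Measure Ω) (B : ℕ → Set Ω)
    (n : ℕ) (x : Ω) : ℝ :=
  if μ (cell B n x) ≠ 0 then (ν (cell B n x)).toReal / (μ (cell B n x)).toReal else 0

/-!
Put `ρ = μ + ν`. For a finite measure `ξ ≤ ρ`, the ratio `ξ(A_n(x)) / ρ(A_n(x))` over the cell
`A_n(x)` of the `n`-th partition is the conditional expectation of `dξ/dρ` given that partition.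
Since the partitions generate the σ-algebra, Lévy's upward theorem makes these ratios converge
`ρ`-a.e. to `dξ/dρ`. Taking `ξ = ν` and `ξ = μ` and dividing, `ν(A_n(x)) / μ(A_n(x))` converges
`μ`-a.e. to `(dν/dρ) / (dμ/dρ)`, which is `dν^a/dμ` `μ`-a.e. because `dμ/dρ > 0` `μ`-a.e. while
`dν^s/dρ = 0` `μ`-a.e.
-/

section

open ProbabilityTheory MeasurableSpace

variable {Ω : Type*}

lemma cell_eq_memPartitionSet (B : ℕ → Set Ω) (n : ℕ) (x : Ω) :
    cell B n x = memPartitionSet B (n + 1) x := by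
  induction n with
  | zero =>
    rw [memPartitionSet_succ]
    by_cases h : x ∈ B 0 <;> simp [cell, h, Set.sdiff_eq]
  | succ n ih =>
    have hcell : cell B (n + 1) x
        = cell B n x ∩ (if x ∈ B (n + 1) then B (n + 1) else (B (n + 1))ᶜ) := by
      rw [cell, cell, Finset.range_add_one, Finset.set_biInter_insert, Set.inter_comm]
    rw [hcell, ih, memPartitionSet_succ B (n + 1)]
    by_cases h : x ∈ B (n + 1) <;> simp [h, Set.sdiff_eq]

variable {m : MeasurableSpace Ω}

noncomputable def partitionRatio (ξ ρ : Measure Ω) (B : ℕ → Set Ω) (n : ℕ) (x : Ω) : ℝ :=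
  ξ.real (memPartitionSet B n x) / ρ.real (memPartitionSet B n x)

section partitionRatio

variable (ξ ρ : Measure Ω) {B : ℕ → Set Ω}

lemma stronglyMeasurable_partitionRatio (hmB : ∀ n, MeasurableSet (B n)) (n : ℕ) :
    StronglyMeasurable[partitionFiltration hmB n] (partitionRatio ξ ρ B n) :=
  ((measurable_from_top (f := fun u : memPartition B n => ξ.real u / ρ.real u)).comp
    (measurable_memPartitionSet_subtype hmB n ⊤)).stronglyMeasurable

lemma partitionRatio_eq_of_mem {n : ℕ} {u : Set Ω} (hu : u ∈ memPartition B n) {x : Ω}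
    (hx : x ∈ u) : partitionRatio ξ ρ B n x = ξ.real u / ρ.real u := by
  rw [partitionRatio, memPartitionSet_of_mem hu hx]

variable {ξ ρ}

lemma partitionRatio_nonneg (n : ℕ) (x : Ω) : 0 ≤ partitionRatio ξ ρ B n x := by
  unfold partitionRatio; positivity

lemma partitionRatio_le_one [IsFiniteMeasure ρ] (hle : ξ ≤ ρ) (n : ℕ) (x : Ω) :
    partitionRatio ξ ρ B n x ≤ 1 :=
  div_le_one_of_le₀ (ENNReal.toReal_mono (measure_ne_top _ _) (hle _)) measureReal_nonneg

lemma integrable_partitionRatio [IsFiniteMeasure ρ] (hle : ξ ≤ ρ)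
    (hmB : ∀ n, MeasurableSet (B n)) (n : ℕ) : Integrable (partitionRatio ξ ρ B n) ρ := by
  refine Integrable.mono' (integrable_const (1 : ℝ))
    ((stronglyMeasurable_partitionRatio ξ ρ hmB n).mono
      ((partitionFiltration hmB).le n)).aestronglyMeasurable (ae_of_all _ fun x => ?_)
  rw [Real.norm_of_nonneg (partitionRatio_nonneg n x)]
  exact partitionRatio_le_one hle n x

lemma setIntegral_partitionRatio_of_mem [IsFiniteMeasure ρ] (hle : ξ ≤ ρ)
    (hmB : ∀ n, MeasurableSet (B n)) {n : ℕ} {u : Set Ω} (hu : u ∈ memPartition B n) :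
    ∫ x in u, partitionRatio ξ ρ B n x ∂ρ = ξ.real u := by
  rw [setIntegral_congr_fun (measurableSet_memPartition hmB n hu)
    fun x hx => partitionRatio_eq_of_mem ξ ρ hu hx, setIntegral_const, smul_eq_mul]
  by_cases h0 : ρ u = 0
  · simp [measureReal_def, h0, Measure.absolutelyContinuous_of_le hle h0]
  · exact mul_div_cancel₀ _ (ENNReal.toReal_ne_zero.mpr ⟨h0, measure_ne_top _ _⟩)

lemma partitionRatio_ae_eq_condExp [IsFiniteMeasure ρ] [IsFiniteMeasure ξ] (hle : ξ ≤ ρ)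
    (hmB : ∀ n, MeasurableSet (B n)) (n : ℕ) :
    partitionRatio ξ ρ B n
      =ᵐ[ρ] ρ[fun x => (ξ.rnDeriv ρ x).toReal | partitionFiltration hmB n] := by
  have hint := integrable_partitionRatio hle hmB n
  refine ae_eq_condExp_of_forall_setIntegral_eq ((partitionFiltration hmB).le n)
    Measure.integrable_toReal_rnDeriv (fun s _ _ => hint.integrableOn) (fun s hs _ => ?_)
    (stronglyMeasurable_partitionRatio ξ ρ hmB n).aestronglyMeasurable
  rw [Measure.setIntegral_toReal_rnDeriv (Measure.absolutelyContinuous_of_le hle) s]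
  obtain ⟨S, hS, rfl⟩ := (measurableSet_generateFrom_memPartition_iff B n s).mp hs
  have hSmeas : ∀ u ∈ S, MeasurableSet u := fun u hu => measurableSet_memPartition hmB n (hS hu)
  have hdisj : (S : Set (Set Ω)).PairwiseDisjoint id :=
    fun u hu v hv huv => disjoint_memPartition B n (hS hu) (hS hv) huv
  rw [sUnion_eq_biUnion, Finset.set_biUnion_coe,
    integral_biUnion_finset S hSmeas hdisj fun u _ => hint.integrableOn,
    measureReal_biUnion_finset (f := fun u => u) hdisj hSmeas]
  exact Finset.sum_congr rfl fun u hu => setIntegral_partitionRatio_of_mem hle hmB (hS hu)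

lemma ae_tendsto_partitionRatio [IsFiniteMeasure ρ] [IsFiniteMeasure ξ] (hle : ξ ≤ ρ)
    (hB : m = generateFrom (range B)) :
    ∀ᵐ x ∂ρ, Tendsto (partitionRatio ξ ρ B · x) atTop (𝓝 (ξ.rnDeriv ρ x).toReal) := by
  have hmB : ∀ n, MeasurableSet (B n) := fun n => hB ▸ measurableSet_generateFrom ⟨n, rfl⟩
  have hsm : StronglyMeasurable[⨆ n, partitionFiltration hmB n]
      fun x => (ξ.rnDeriv ρ x).toReal := by
    rw [iSup_partitionFiltration hmB hB.symm]
    exact (Measure.measurable_rnDeriv _ _).ennreal_toReal.stronglyMeasurable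
  filter_upwards [Measure.integrable_toReal_rnDeriv.tendsto_ae_condExp hsm,
    ae_all_iff.2 (partitionRatio_ae_eq_condExp hle hmB)] with x hx hx_eq
  exact hx.congr fun n => (hx_eq n).symm

end partitionRatio

lemma ae_measure_memPartitionSet_ne_zero (μ : Measure Ω) (B : ℕ → Set Ω) :
    ∀ᵐ x ∂μ, ∀ n, μ (memPartitionSet B n x) ≠ 0 := by
  refine ae_all_iff.2 fun n => ?_
  have hnull : μ (⋃₀ {A ∈ memPartition B n | μ A = 0}) = 0 :=
    (measure_sUnion_null_iff ((finite_memPartition B n).subset (sep_subset _ _)).countable).2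
      fun A hA => hA.2
  refine measure_mono_null (fun x hx => ?_) hnull
  exact ⟨memPartitionSet B n x, ⟨memPartitionSet_mem B n x, not_not.1 hx⟩,
    mem_memPartitionSet B n x⟩

lemma fPart_eq_partitionRatio_div {μ ν ρ : Measure Ω} [IsFiniteMeasure ρ] (hμρ : μ ≤ ρ)
    {B : ℕ → Set Ω} {n : ℕ} {x : Ω} (hx : μ (cell B n x) ≠ 0) :
    fPart μ ν B n x = partitionRatio ν ρ B (n + 1) x / partitionRatio μ ρ B (n + 1) x := by
  have hρ : ρ.real (cell B n x) ≠ 0 :=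
    ENNReal.toReal_ne_zero.2 ⟨fun h => hx (le_antisymm ((hμρ _).trans h.le) bot_le),
      measure_ne_top _ _⟩
  rw [fPart, if_pos hx, partitionRatio, partitionRatio, ← cell_eq_memPartitionSet,
    div_div_div_cancel_right₀ hρ, measureReal_def, measureReal_def]

end

/-- **Differentiation of measures on a separable measurable space.** If the σ-algebra of `Ω`
is generated by a sequence of sets `(B_j)_{j ∈ ℕ}` and `π_n` is the finite partition of `Ω`
generated by `B_0, …, B_n`, then for finite measures `μ, ν`, the functions
`f_{π_n}(μ) = Σ_{A ∈ π_n, μ(A) > 0} 1_A ⬝ ν(A)/μ(A)` converge `μ`-a.e. to the Radon–Nikodym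
derivative `dν^a/dμ` of the absolutely continuous part of `ν` with respect to `μ`. -/
theorem stmt2 {Ω : Type*} {m : MeasurableSpace Ω} (μ ν : Measure Ω)
    [IsFiniteMeasure μ] [IsFiniteMeasure ν] (B : ℕ → Set Ω)
    (hB : m = MeasurableSpace.generateFrom (Set.range B)) :
    ∀ᵐ x ∂μ, Tendsto (fun n => fPart μ ν B n x) atTop (𝓝 ((ν.rnDeriv μ x).toReal)) := by
  set ρ := μ + ν
  have hμρ : μ ≤ ρ := Measure.le_add_right le_rfl
  have hμρ_ac : μ ≪ ρ := Measure.absolutelyContinuous_of_le hμρ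
  have hνρ : ν ≤ ρ := Measure.le_add_left le_rfl
  have hνρ_ac : ν ≪ ρ := Measure.absolutelyContinuous_of_le hνρ
  filter_upwards [hμρ_ac.ae_le (ae_tendsto_partitionRatio hμρ hB),
    hμρ_ac.ae_le (ae_tendsto_partitionRatio hνρ hB),
    ae_measure_memPartitionSet_ne_zero μ B, Measure.rnDeriv_eq_div hνρ_ac hμρ_ac,
    Measure.rnDeriv_pos hμρ_ac, hμρ_ac.ae_le (Measure.rnDeriv_lt_top μ ρ)]
    with x hμx hνx hx0 hdiv hpos hfin
  rw [hdiv, ENNReal.toReal_div]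
  refine ((hνx.comp (tendsto_add_atTop_nat 1)).div (hμx.comp (tendsto_add_atTop_nat 1))
    (ENNReal.toReal_pos hpos.ne' hfin.ne).ne').congr fun n => ?_
  exact (fPart_eq_partitionRatio_div hμρ (cell_eq_memPartitionSet B n x ▸ hx0 (n + 1))).symm
end

section
/- Let γ := μ + ν, and let (π_n)_{n∈ℕ} be an increasing sequence of finite measurable partitions of Ω (i.e. π_{n+1} refines π_n for all n) chosen so that sup_n ∫_Ω e^{−f_{π_n}(γ)} dγ = sup_π ∫_Ω e^{−f_π(γ)} dγ, where the supremum on the right is over all finite measurable partitions π of Ω and f_π(γ) := Σ_{A ∈ π, γ(A) > 0} 1_A · ν(A)/γ(A). Then f_{π_n}(μ) := Σ_{A ∈ π_n, μ(A) > 0} 1_A · ν(A)/μ(A) converges μ-a.e. to dν^a/dμ as n → ∞. -/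
open MeasureTheory Filter Set
open scoped ENNReal Topology Classical

/-- A finite measurable partition of `Ω`: a finite collection of pairwise disjoint measurable
sets whose union is `Ω`. -/
def IsFinitePartition {Ω : Type*} [MeasurableSpace Ω] (π : Finset (Set Ω)) : Prop :=
  (∀ A ∈ π, MeasurableSet A) ∧
    (π : Set (Set Ω)).PairwiseDisjoint id ∧
    ⋃₀ (π : Set (Set Ω)) = Set.univ

/-- `π'` refines `π` if every element of `π` is a union of elements of `π'`. -/
def Refines {Ω : Type*} (π' π : Finset (Set Ω)) : Prop :=
  ∀ A ∈ π, ∃ S ⊆ π', A = ⋃₀ (S : Set (Set Ω))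

/-- `f_π(λ) := Σ_{A ∈ π, λ(A) > 0} 1_A ⬝ ν(A)/λ(A)`. -/
noncomputable def partFn {Ω : Type*} [MeasurableSpace Ω] (ν lam : Measure Ω)
    (π : Finset (Set Ω)) (x : Ω) : ℝ :=
  ∑ A ∈ π, if lam A ≠ 0 ∧ x ∈ A then (ν A).toReal / (lam A).toReal else 0

/-!
Write `γ = μ + ν` and `g_n = f_{π_n}(γ)`, a function with values in `[0, 1]`. Since `π_{n+1}`
refines `π_n`, `(g_n)` is a bounded martingale for the filtration generated by the partitions,
so it converges `γ`-a.e. The bound `e^{-t} ≥ e^{-a} (1 - (t - a)) + e^{-1} (t - a)² / 4` for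
`a ∈ [0, 1]`, `t ≤ a + 2`, integrated over the cells of `π_n`, shows that passing from `π_n` to a
refinement `q` raises `∫ e^{-f(γ)} dγ` by at least `e^{-1}/4 · ‖f_q(γ) - g_n‖²_{L²(γ)}`. As the
values for `π_n` approach the supremum over all partitions, `g_n` becomes `L²`-close to
`f_q(γ)` for `q` the common refinement of `π_n` and `{A, Aᶜ}`, whose integral over `A` is exactly
`ν(A)`. Hence `∫_A g_n dγ → ν(A)` for every measurable `A`, and the a.e. limit of `g_n` is
`dν/dγ`. Finally `f_{π_n}(μ) = g_n / (1 - g_n)` on the cells of positive `μ`-measure, and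
`dν/dμ = (dν/dγ) / (1 - dν/dγ)` `μ`-a.e.
-/

section

variable {Ω : Type*} {p q : Finset (Set Ω)} {A s : Set Ω}

lemma Refines.generateFrom_le (h : Refines q p) :
    MeasurableSpace.generateFrom (p : Set (Set Ω)) ≤ MeasurableSpace.generateFrom q := by
  refine MeasurableSpace.generateFrom_le fun A hA => ?_
  obtain ⟨S, hS, rfl⟩ := h A hA
  exact .sUnion S.countable_toSet fun B hB => MeasurableSpace.measurableSet_generateFrom (hS hB)

noncomputable def commonRefinement (p q : Finset (Set Ω)) : Finset (Set Ω) :=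
  (p ×ˢ q).image fun z => z.1 ∩ z.2

lemma mem_commonRefinement {C : Set Ω} :
    C ∈ commonRefinement p q ↔ ∃ A ∈ p, ∃ B ∈ q, A ∩ B = C := by
  simp [commonRefinement, and_assoc]

variable [MeasurableSpace Ω]

namespace IsFinitePartition

lemma measurableSet (hp : IsFinitePartition p) (hA : A ∈ p) : MeasurableSet A :=
  hp.1 A hA

lemma exists_mem (hp : IsFinitePartition p) (x : Ω) : ∃ A ∈ p, x ∈ A := by
  have hx : x ∈ ⋃₀ (p : Set (Set Ω)) := by rw [hp.2.2]; exact mem_univ x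
  simpa using hx

lemma eq_of_mem (hp : IsFinitePartition p) {A B : Set Ω} (hA : A ∈ p) (hB : B ∈ p) {x : Ω}
    (hxA : x ∈ A) (hxB : x ∈ B) : A = B :=
  hp.2.1.elim hA hB (not_disjoint_iff.2 ⟨x, hxA, hxB⟩)

lemma refines_of_forall_subset (hp : IsFinitePartition p) (hq : IsFinitePartition q)
    (h : ∀ B ∈ q, ∃ A ∈ p, B ⊆ A) : Refines q p := by
  intro A hA
  refine ⟨q.filter (· ⊆ A), Finset.filter_subset _ _,
    subset_antisymm (fun x hx => ?_) (sUnion_subset fun B hB => (Finset.mem_filter.1 hB).2)⟩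
  obtain ⟨B, hB, hxB⟩ := hq.exists_mem x
  obtain ⟨A', hA', hBA'⟩ := h B hB
  obtain rfl := hp.eq_of_mem hA hA' hx (hBA' hxB)
  exact ⟨B, Finset.mem_filter.2 ⟨hB, hBA'⟩, hxB⟩

lemma exists_eq_sUnion (hp : IsFinitePartition p)
    (hs : MeasurableSet[MeasurableSpace.generateFrom p] s) : ∃ S ⊆ p, s = ⋃₀ ↑S := by
  suffices h : ∀ A ∈ p, A ⊆ s ∨ Disjoint A s by
    refine ⟨p.filter (· ⊆ s), Finset.filter_subset _ _,
      subset_antisymm (fun x hx => ?_) (sUnion_subset fun A hA => (Finset.mem_filter.1 hA).2)⟩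
    obtain ⟨A, hA, hxA⟩ := hp.exists_mem x
    exact ⟨A, Finset.mem_filter.2
      ⟨hA, (h A hA).resolve_right (not_disjoint_iff.2 ⟨x, hxA, hx⟩)⟩, hxA⟩
  induction s, hs using MeasurableSpace.generateFrom_induction with
  | hC t ht =>
    intro A hA
    by_cases hAt : A = t
    · exact .inl hAt.le
    · exact .inr (hp.2.1 hA ht hAt)
  | empty => exact fun A _ => .inr (disjoint_empty A)
  | compl t _ ih =>
    exact fun A hA => (ih A hA).symm.imp subset_compl_iff_disjoint_right.2
      disjoint_compl_right_iff_subset.2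
  | iUnion t _ ih =>
    intro A hA
    by_cases h : ∃ i, A ⊆ t i
    · obtain ⟨i, hi⟩ := h
      exact .inl (hi.trans (subset_iUnion t i))
    · push Not at h
      exact .inr (disjoint_iUnion_right.2 fun i => (ih i A hA).resolve_left (h i))

lemma setIntegral_sUnion {μ : Measure Ω} {f : Ω → ℝ} (hp : IsFinitePartition p)
    {S : Finset (Set Ω)} (hS : S ⊆ p) (hf : Integrable f μ) :
    ∫ x in ⋃₀ ↑S, f x ∂μ = ∑ A ∈ S, ∫ x in A, f x ∂μ := by
  rw [sUnion_eq_biUnion, Finset.set_biUnion_coe]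
  exact integral_biUnion_finset S (fun A hA => hp.measurableSet (hS hA))
    (hp.2.1.subset (Finset.coe_subset.2 hS)) fun _ _ => hf.integrableOn

lemma integral_eq_sum {μ : Measure Ω} {f : Ω → ℝ} (hp : IsFinitePartition p)
    (hf : Integrable f μ) : ∫ x, f x ∂μ = ∑ A ∈ p, ∫ x in A, f x ∂μ := by
  rw [← setIntegral_univ, ← hp.2.2]
  exact hp.setIntegral_sUnion subset_rfl hf

end IsFinitePartition

lemma IsFinitePartition.commonRefinement (hp : IsFinitePartition p) (hq : IsFinitePartition q) :
    IsFinitePartition (commonRefinement p q) := by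
  refine ⟨?_, ?_, eq_univ_of_forall fun x => ?_⟩
  · intro C hC
    obtain ⟨A, hA, B, hB, rfl⟩ := mem_commonRefinement.1 hC
    exact (hp.measurableSet hA).inter (hq.measurableSet hB)
  · intro C hC C' hC' hne
    obtain ⟨A, hA, B, hB, rfl⟩ := mem_commonRefinement.1 hC
    obtain ⟨A', hA', B', hB', rfl⟩ := mem_commonRefinement.1 hC'
    refine disjoint_left.2 fun x hx hx' => hne ?_
    rw [hp.eq_of_mem hA hA' hx.1 hx'.1, hq.eq_of_mem hB hB' hx.2 hx'.2]
  · obtain ⟨A, hA, hxA⟩ := hp.exists_mem x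
    obtain ⟨B, hB, hxB⟩ := hq.exists_mem x
    exact ⟨A ∩ B, mem_commonRefinement.2 ⟨A, hA, B, hB, rfl⟩, hxA, hxB⟩

lemma refines_commonRefinement_left (hp : IsFinitePartition p) (hq : IsFinitePartition q) :
    Refines (commonRefinement p q) p :=
  hp.refines_of_forall_subset (hp.commonRefinement hq) fun C hC => by
    obtain ⟨A, hA, B, -, rfl⟩ := mem_commonRefinement.1 hC
    exact ⟨A, hA, inter_subset_left⟩

lemma refines_commonRefinement_right (hp : IsFinitePartition p) (hq : IsFinitePartition q) :
    Refines (commonRefinement p q) q :=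
  hq.refines_of_forall_subset (hp.commonRefinement hq) fun C hC => by
    obtain ⟨-, -, B, hB, rfl⟩ := mem_commonRefinement.1 hC
    exact ⟨B, hB, inter_subset_right⟩

lemma isFinitePartition_pair (hA : MeasurableSet A) : IsFinitePartition {A, Aᶜ} := by
  refine ⟨?_, ?_, by simp⟩
  · intro B hB
    rcases Finset.mem_insert.1 hB with rfl | hB
    · exact hA
    · exact Finset.mem_singleton.1 hB ▸ hA.compl
  · rw [Finset.coe_pair]
    exact pairwise_pair_of_symm.2 fun _ => disjoint_compl_right

section partFn

variable {ν lam : Measure Ω}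

-- The guard `lam A ≠ 0` in `partFn` disappears because `ν.real A / 0 = 0`.
lemma partFn_eq_of_mem (hp : IsFinitePartition p) (hA : A ∈ p) {x : Ω} (hx : x ∈ A) :
    partFn ν lam p x = ν.real A / lam.real A := by
  rw [partFn, Finset.sum_eq_single_of_mem A hA]
  · by_cases h : lam A = 0 <;> simp [h, hx, measureReal_def]
  · intro B hB hBA
    rw [if_neg fun h => hBA (hp.eq_of_mem hB hA h.2 hx)]

lemma partFn_nonneg (ν lam : Measure Ω) (p : Finset (Set Ω)) (x : Ω) : 0 ≤ partFn ν lam p x :=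
  Finset.sum_nonneg fun _ _ => by split_ifs <;> positivity

lemma partFn_le_one [IsFiniteMeasure lam] (hν : ν ≤ lam) (hp : IsFinitePartition p) (x : Ω) :
    partFn ν lam p x ≤ 1 := by
  obtain ⟨A, hA, hxA⟩ := hp.exists_mem x
  rw [partFn_eq_of_mem hp hA hxA]
  exact div_le_one_of_le₀ (ENNReal.toReal_mono (measure_ne_top lam A) (hν A)) measureReal_nonneg

lemma measurable_partFn_generateFrom (ν lam : Measure Ω) (p : Finset (Set Ω)) :
    Measurable[MeasurableSpace.generateFrom p] (partFn ν lam p) :=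
  Finset.measurable_sum _ fun _ hA => Measurable.ite
    ((MeasurableSet.const _).inter (MeasurableSpace.measurableSet_generateFrom hA))
    measurable_const measurable_const

lemma measurable_partFn (hp : IsFinitePartition p) : Measurable (partFn ν lam p) :=
  (measurable_partFn_generateFrom ν lam p).mono (MeasurableSpace.generateFrom_le hp.1) le_rfl

lemma integrable_partFn {μ : Measure Ω} [IsFiniteMeasure μ] (hp : IsFinitePartition p) :
    Integrable (partFn ν lam p) μ := by
  refine .of_bound (measurable_partFn hp).aestronglyMeasurable
    (∑ A ∈ p, ν.real A / lam.real A) (ae_of_all _ fun x => ?_)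
  obtain ⟨A, hA, hxA⟩ := hp.exists_mem x
  rw [Real.norm_of_nonneg (partFn_nonneg ν lam p x), partFn_eq_of_mem hp hA hxA]
  exact Finset.single_le_sum (f := fun B => ν.real B / lam.real B) (fun B _ => by positivity) hA

lemma setIntegral_partFn_of_mem [IsFiniteMeasure lam] (hν : ν ≪ lam) (hp : IsFinitePartition p)
    (hA : A ∈ p) : ∫ x in A, partFn ν lam p x ∂lam = ν.real A := by
  rw [setIntegral_congr_fun (hp.measurableSet hA) fun x hx => partFn_eq_of_mem hp hA hx,
    setIntegral_const, smul_eq_mul]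
  refine mul_div_cancel_of_imp' fun h => ?_
  rw [measureReal_def, hν ((measureReal_eq_zero_iff (measure_ne_top lam A)).1 h),
    ENNReal.toReal_zero]

lemma setIntegral_partFn_of_refines [IsFiniteMeasure ν] [IsFiniteMeasure lam] (hν : ν ≪ lam)
    (hq : IsFinitePartition q) (hqp : Refines q p) (hA : A ∈ p) :
    ∫ x in A, partFn ν lam q x ∂lam = ν.real A := by
  obtain ⟨S, hS, rfl⟩ := hqp A hA
  rw [hq.setIntegral_sUnion hS (integrable_partFn hq), sUnion_eq_biUnion, Finset.set_biUnion_coe,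
    measureReal_biUnion_finset (f := fun B => B) (hq.2.1.subset (Finset.coe_subset.2 hS))
      fun B hB => hq.measurableSet (hS hB)]
  exact Finset.sum_congr rfl fun B hB => setIntegral_partFn_of_mem hν hq (hS hB)

lemma setIntegral_partFn_of_measurableSet_generateFrom [IsFiniteMeasure ν] [IsFiniteMeasure lam]
    (hν : ν ≪ lam) (hp : IsFinitePartition p) (hq : IsFinitePartition q) (hqp : Refines q p)
    (hs : MeasurableSet[MeasurableSpace.generateFrom p] s) :
    ∫ x in s, partFn ν lam q x ∂lam = ∫ x in s, partFn ν lam p x ∂lam := by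
  obtain ⟨S, hS, rfl⟩ := hp.exists_eq_sUnion hs
  rw [hp.setIntegral_sUnion hS (integrable_partFn hq),
    hp.setIntegral_sUnion hS (integrable_partFn hp)]
  exact Finset.sum_congr rfl fun A hA =>
    (setIntegral_partFn_of_refines hν hq hqp (hS hA)).trans
      (setIntegral_partFn_of_mem hν hp (hS hA)).symm

end partFn

def partitionFiltration (π : ℕ → Finset (Set Ω)) (hπ : ∀ n, IsFinitePartition (π n))
    (hmono : ∀ n, Refines (π (n + 1)) (π n)) : Filtration ℕ ‹MeasurableSpace Ω› where
  seq n := MeasurableSpace.generateFrom (π n)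
  mono' := monotone_nat_of_le_succ fun n => (hmono n).generateFrom_le
  le' n := MeasurableSpace.generateFrom_le (hπ n).1

lemma martingale_partFn {ν lam : Measure Ω} [IsFiniteMeasure ν] [IsFiniteMeasure lam]
    (hν : ν ≪ lam) {π : ℕ → Finset (Set Ω)} (hπ : ∀ n, IsFinitePartition (π n))
    (hmono : ∀ n, Refines (π (n + 1)) (π n)) :
    Martingale (fun n => partFn ν lam (π n)) (partitionFiltration π hπ hmono) lam :=
  martingale_of_setIntegral_eq_succ
    (fun n => (measurable_partFn_generateFrom ν lam (π n)).stronglyMeasurable)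
    (fun n => integrable_partFn (hπ n)) fun n _ hs =>
      (setIntegral_partFn_of_measurableSet_generateFrom hν (hπ n) (hπ (n + 1)) (hmono n) hs).symm

noncomputable def partEnergy (ν lam : Measure Ω) (p : Finset (Set Ω)) : ℝ :=
  ∫ x, Real.exp (-partFn ν lam p x) ∂lam

lemma quadratic_le_exp_neg {a t : ℝ} (ha : a ≤ 1) (ht : t ≤ a + 2) :
    Real.exp (-a) - Real.exp (-a) * (t - a) + Real.exp (-1) / 4 * (t - a) ^ 2 ≤ Real.exp (-t) := by
  have h1 : 0 ≤ 1 + (a - t) / 2 := by linarith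
  have h2 : 1 + (a - t) / 2 ≤ Real.exp ((a - t) / 2) := by
    linarith [Real.add_one_le_exp ((a - t) / 2)]
  have h3 : Real.exp (-t) = Real.exp (-a) * Real.exp ((a - t) / 2) ^ 2 := by
    rw [← Real.exp_nat_mul, ← Real.exp_add]; ring_nf
  have h4 : Real.exp (-1) ≤ Real.exp (-a) := Real.exp_le_exp.2 (by linarith)
  calc Real.exp (-a) - Real.exp (-a) * (t - a) + Real.exp (-1) / 4 * (t - a) ^ 2
      ≤ Real.exp (-a) * (1 + (a - t) / 2) ^ 2 := by nlinarith [sq_nonneg (t - a)]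
    _ ≤ Real.exp (-t) := by rw [h3]; gcongr

lemma exp_neg_mul_add_le_setIntegral_exp_neg {lam : Measure Ω} [IsFiniteMeasure lam]
    {φ : Ω → ℝ} {a : ℝ} (hφm : Measurable φ) (hφ0 : ∀ x, 0 ≤ φ x) (hφ1 : ∀ x, φ x ≤ 1)
    (ha0 : 0 ≤ a) (ha1 : a ≤ 1) (hmean : ∫ x in A, φ x ∂lam = lam.real A * a) :
    Real.exp (-a) * lam.real A + Real.exp (-1) / 4 * ∫ x in A, (φ x - a) ^ 2 ∂lam
      ≤ ∫ x in A, Real.exp (-φ x) ∂lam := by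
  have hφ : Integrable φ (lam.restrict A) := .of_bound hφm.aestronglyMeasurable 1
    (ae_of_all _ fun x => by rw [Real.norm_of_nonneg (hφ0 x)]; exact hφ1 x)
  have hsq : Integrable (fun x => (φ x - a) ^ 2) (lam.restrict A) := .of_bound (by fun_prop) 1
    (ae_of_all _ fun x => by
      rw [Real.norm_of_nonneg (sq_nonneg _), sq_le_one_iff_abs_le_one, abs_le]
      constructor <;> linarith [hφ0 x, hφ1 x])
  have hexp : Integrable (fun x => Real.exp (-φ x)) (lam.restrict A) := .of_bound (by fun_prop) 1
    (ae_of_all _ fun x => by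
      rw [Real.norm_of_nonneg (Real.exp_pos _).le, Real.exp_le_one_iff]; linarith [hφ0 x])
  have hlin : Integrable (fun x => Real.exp (-a) * (φ x - a)) (lam.restrict A) :=
    (hφ.sub (integrable_const a)).const_mul _
  have hlin' : Integrable (fun x => Real.exp (-a) - Real.exp (-a) * (φ x - a)) (lam.restrict A) :=
    (integrable_const _).sub hlin
  calc Real.exp (-a) * lam.real A + Real.exp (-1) / 4 * ∫ x in A, (φ x - a) ^ 2 ∂lam
      = ∫ x in A, (Real.exp (-a) - Real.exp (-a) * (φ x - a)
          + Real.exp (-1) / 4 * (φ x - a) ^ 2) ∂lam := by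
        rw [integral_add hlin' (hsq.const_mul _),
          integral_sub (integrable_const _) hlin, integral_const_mul, integral_const_mul,
          integral_sub hφ (integrable_const a), hmean, setIntegral_const, setIntegral_const]
        simp only [smul_eq_mul]
        ring
    _ ≤ ∫ x in A, Real.exp (-φ x) ∂lam :=
        integral_mono (hlin'.add (hsq.const_mul _)) hexp fun x =>
          quadratic_le_exp_neg ha1 (by linarith [hφ1 x])

section energy

variable {ν lam : Measure Ω} [IsFiniteMeasure lam]

lemma norm_partFn_le_one (hν : ν ≤ lam) (hp : IsFinitePartition p) (x : Ω) :
    ‖partFn ν lam p x‖ ≤ 1 := by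
  rw [Real.norm_of_nonneg (partFn_nonneg ν lam p x)]
  exact partFn_le_one hν hp x

lemma integrable_sq_partFn_sub (hν : ν ≤ lam) (hp : IsFinitePartition p)
    (hq : IsFinitePartition q) :
    Integrable (fun x => (partFn ν lam q x - partFn ν lam p x) ^ 2) lam := by
  have hm : Measurable fun x => (partFn ν lam q x - partFn ν lam p x) ^ 2 :=
    ((measurable_partFn hq).sub (measurable_partFn hp)).pow_const 2
  refine .of_bound hm.aestronglyMeasurable 1 (ae_of_all _ fun x => ?_)
  rw [Real.norm_of_nonneg (sq_nonneg _), sq_le_one_iff_abs_le_one, abs_sub_le_iff]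
  constructor <;>
    linarith [partFn_nonneg ν lam p x, partFn_nonneg ν lam q x, partFn_le_one hν hp x,
      partFn_le_one hν hq x]

lemma integrable_exp_neg_partFn (hp : IsFinitePartition p) :
    Integrable (fun x => Real.exp (-partFn ν lam p x)) lam :=
  .of_bound (measurable_partFn hp).neg.exp.aestronglyMeasurable 1 (ae_of_all _ fun x => by
    rw [Real.norm_of_nonneg (Real.exp_pos _).le, Real.exp_le_one_iff, neg_nonpos]
    exact partFn_nonneg ν lam p x)

lemma setIntegral_exp_neg_partFn_add_le (hν : ν ≤ lam) (hp : IsFinitePartition p)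
    (hq : IsFinitePartition q) (hqp : Refines q p) (hA : A ∈ p) :
    ∫ x in A, Real.exp (-partFn ν lam p x) ∂lam
        + Real.exp (-1) / 4 * ∫ x in A, (partFn ν lam q x - partFn ν lam p x) ^ 2 ∂lam
      ≤ ∫ x in A, Real.exp (-partFn ν lam q x) ∂lam := by
  have := isFiniteMeasure_of_le lam hν
  have hAm := hp.measurableSet hA
  set a := ν.real A / lam.real A
  have hpA : EqOn (partFn ν lam p) (fun _ => a) A := fun x hx => partFn_eq_of_mem hp hA hx
  have e1 : ∫ x in A, Real.exp (-partFn ν lam p x) ∂lam = Real.exp (-a) * lam.real A := by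
    rw [setIntegral_congr_fun hAm (g := fun _ => Real.exp (-a)) fun x hx => by simp only [hpA hx],
      setIntegral_const, smul_eq_mul, mul_comm]
  have e2 : ∫ x in A, (partFn ν lam q x - partFn ν lam p x) ^ 2 ∂lam
      = ∫ x in A, (partFn ν lam q x - a) ^ 2 ∂lam :=
    setIntegral_congr_fun hAm fun x hx => by simp only [hpA hx]
  have hmean : ∫ x in A, partFn ν lam q x ∂lam = lam.real A * a := by
    rw [setIntegral_partFn_of_refines hν.absolutelyContinuous hq hqp hA,
      ← setIntegral_partFn_of_mem hν.absolutelyContinuous hp hA, setIntegral_congr_fun hAm hpA,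
      setIntegral_const, smul_eq_mul]
  rw [e1, e2]
  exact exp_neg_mul_add_le_setIntegral_exp_neg (measurable_partFn hq) (partFn_nonneg ν lam q)
    (partFn_le_one hν hq) (by positivity)
    (div_le_one_of_le₀ (ENNReal.toReal_mono (measure_ne_top lam A) (hν A)) measureReal_nonneg)
    hmean

lemma partEnergy_add_le (hν : ν ≤ lam) (hp : IsFinitePartition p) (hq : IsFinitePartition q)
    (hqp : Refines q p) :
    partEnergy ν lam p
        + Real.exp (-1) / 4 * ∫ x, (partFn ν lam q x - partFn ν lam p x) ^ 2 ∂lam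
      ≤ partEnergy ν lam q := by
  rw [partEnergy, partEnergy, hp.integral_eq_sum (integrable_exp_neg_partFn hp),
    hp.integral_eq_sum (integrable_exp_neg_partFn hq),
    hp.integral_eq_sum (integrable_sq_partFn_sub hν hp hq), Finset.mul_sum,
    ← Finset.sum_add_distrib]
  exact Finset.sum_le_sum fun A hA => setIntegral_exp_neg_partFn_add_le hν hp hq hqp hA

lemma partEnergy_le_measureReal_univ (ν lam : Measure Ω) [IsFiniteMeasure lam]
    (p : Finset (Set Ω)) : partEnergy ν lam p ≤ lam.real univ :=
  calc partEnergy ν lam p ≤ ∫ _, (1 : ℝ) ∂lam :=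
        integral_mono_of_nonneg (ae_of_all _ fun _ => (Real.exp_pos _).le) (integrable_const 1)
          (ae_of_all _ fun x => Real.exp_le_one_iff.2 (neg_nonpos.2 (partFn_nonneg ν lam p x)))
    _ = lam.real univ := by simp

lemma bddAbove_partEnergy (ν lam : Measure Ω) [IsFiniteMeasure lam] :
    BddAbove (range fun p : {p : Finset (Set Ω) // IsFinitePartition p} => partEnergy ν lam p) :=
  ⟨lam.real univ, by rintro _ ⟨p, rfl⟩; exact partEnergy_le_measureReal_univ ν lam p⟩

lemma tendsto_partEnergy (hν : ν ≤ lam) {π : ℕ → Finset (Set Ω)}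
    (hπ : ∀ n, IsFinitePartition (π n)) (hmono : ∀ n, Refines (π (n + 1)) (π n))
    (hmax : ⨆ n, partEnergy ν lam (π n)
      = ⨆ p : {p : Finset (Set Ω) // IsFinitePartition p}, partEnergy ν lam p) :
    Tendsto (fun n => partEnergy ν lam (π n)) atTop
      (𝓝 (⨆ p : {p : Finset (Set Ω) // IsFinitePartition p}, partEnergy ν lam p)) := by
  rw [← hmax]
  refine tendsto_atTop_ciSup (monotone_nat_of_le_succ fun n => ?_)
    ⟨lam.real univ, by rintro _ ⟨n, rfl⟩; exact partEnergy_le_measureReal_univ ν lam (π n)⟩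
  have h := partEnergy_add_le hν (hπ n) (hπ (n + 1)) (hmono n)
  have : 0 ≤ ∫ x, (partFn ν lam (π (n + 1)) x - partFn ν lam (π n) x) ^ 2 ∂lam :=
    integral_nonneg fun _ => sq_nonneg _
  nlinarith [Real.exp_pos (-1)]

end energy

lemma abs_le_add_sq_div {δ : ℝ} (hδ : 0 < δ) (t : ℝ) : |t| ≤ δ + t ^ 2 / δ := by
  rw [add_div' _ _ _ hδ.ne', le_div_iff₀ hδ]
  nlinarith [sq_nonneg (|t| - δ), sq_abs t, abs_nonneg t]

lemma abs_setIntegral_le_add_integral_sq_div {μ : Measure Ω} [IsFiniteMeasure μ] {f : Ω → ℝ}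
    (hf : Integrable f μ) (hf2 : Integrable (fun x => f x ^ 2) μ) (s : Set Ω) {δ : ℝ}
    (hδ : 0 < δ) : |∫ x in s, f x ∂μ| ≤ δ * μ.real univ + (∫ x, f x ^ 2 ∂μ) / δ :=
  calc |∫ x in s, f x ∂μ| ≤ ∫ x in s, |f x| ∂μ := abs_integral_le_integral_abs
    _ ≤ ∫ x, |f x| ∂μ := setIntegral_le_integral hf.abs (ae_of_all _ fun _ => abs_nonneg _)
    _ ≤ ∫ x, (δ + f x ^ 2 / δ) ∂μ :=
        integral_mono hf.abs ((integrable_const δ).add (hf2.div_const δ)) fun x =>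
          abs_le_add_sq_div hδ (f x)
    _ = δ * μ.real univ + (∫ x, f x ^ 2 ∂μ) / δ := by
        rw [integral_add (integrable_const δ) (hf2.div_const δ), integral_const, integral_div,
          smul_eq_mul, mul_comm]

lemma tendsto_setIntegral_of_tendsto_integral_sq {μ : Measure Ω} [IsFiniteMeasure μ]
    {d : ℕ → Ω → ℝ} (hd : ∀ n, Integrable (d n) μ) (hd2 : ∀ n, Integrable (fun x => d n x ^ 2) μ)
    (h : Tendsto (fun n => ∫ x, d n x ^ 2 ∂μ) atTop (𝓝 0)) (s : Set Ω) :
    Tendsto (fun n => ∫ x in s, d n x ∂μ) atTop (𝓝 0) := by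
  rw [Metric.tendsto_atTop] at h ⊢
  intro ε hε
  set δ := ε / (2 * (μ.real univ + 1))
  have hδ : 0 < δ := by positivity
  have hδε : δ * μ.real univ + δ = ε / 2 := by
    simp only [δ]
    field_simp
  obtain ⟨N, hN⟩ := h (δ * (ε / 2)) (by positivity)
  refine ⟨N, fun n hn => ?_⟩
  have hsq : (∫ x, d n x ^ 2 ∂μ) / δ < ε / 2 := by
    rw [div_lt_iff₀' hδ]
    have := hN n hn
    rw [Real.dist_eq, sub_zero] at this
    exact (le_abs_self _).trans_lt this
  rw [Real.dist_eq, sub_zero]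
  linarith [abs_setIntegral_le_add_integral_sq_div (hd n) (hd2 n) s hδ]

lemma tendsto_setIntegral_partFn {ν lam : Measure Ω} [IsFiniteMeasure lam] (hν : ν ≤ lam)
    {π : ℕ → Finset (Set Ω)} (hπ : ∀ n, IsFinitePartition (π n)) {L : ℝ}
    (hlim : Tendsto (fun n => partEnergy ν lam (π n)) atTop (𝓝 L))
    (hL : ∀ p, IsFinitePartition p → partEnergy ν lam p ≤ L) (hA : MeasurableSet A) :
    Tendsto (fun n => ∫ x in A, partFn ν lam (π n) x ∂lam) atTop (𝓝 (ν.real A)) := by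
  have := isFiniteMeasure_of_le lam hν
  have hAp := isFinitePartition_pair hA
  set r := fun n => commonRefinement (π n) {A, Aᶜ}
  have hr n : IsFinitePartition (r n) := (hπ n).commonRefinement hAp
  set d := fun n x => partFn ν lam (r n) x - partFn ν lam (π n) x
  have hd n : Integrable (d n) lam := (integrable_partFn (hr n)).sub (integrable_partFn (hπ n))
  have hd2 n : Integrable (fun x => d n x ^ 2) lam := integrable_sq_partFn_sub hν (hπ n) (hr n)
  have hsq : Tendsto (fun n => ∫ x, d n x ^ 2 ∂lam) atTop (𝓝 0) := by
    have hbound n : ∫ x, d n x ^ 2 ∂lam ≤ (L - partEnergy ν lam (π n)) / (Real.exp (-1) / 4) := by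
      rw [le_div_iff₀' (by positivity)]
      linarith [partEnergy_add_le hν (hπ n) (hr n) (refines_commonRefinement_left (hπ n) hAp),
        hL _ (hr n)]
    refine squeeze_zero (fun n => integral_nonneg fun _ => sq_nonneg _) hbound ?_
    simpa using ((tendsto_const_nhds (x := L)).sub hlim).div_const (Real.exp (-1) / 4)
  have hsplit n : ∫ x in A, partFn ν lam (π n) x ∂lam = ν.real A - ∫ x in A, d n x ∂lam := by
    rw [integral_sub (integrable_partFn (hr n)).integrableOn
        (integrable_partFn (hπ n)).integrableOn,
      setIntegral_partFn_of_refines hν.absolutelyContinuous (hr n)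
        (refines_commonRefinement_right (hπ n) hAp) (Finset.mem_insert_self A _)]
    ring
  simp_rw [hsplit]
  simpa using tendsto_const_nhds.sub (tendsto_setIntegral_of_tendsto_integral_sq hd hd2 hsq A)

theorem ae_tendsto_partFn_rnDeriv {ν lam : Measure Ω} [IsFiniteMeasure lam] (hν : ν ≤ lam)
    {π : ℕ → Finset (Set Ω)} (hπ : ∀ n, IsFinitePartition (π n))
    (hmono : ∀ n, Refines (π (n + 1)) (π n))
    (hmax : ⨆ n, partEnergy ν lam (π n)
      = ⨆ p : {p : Finset (Set Ω) // IsFinitePartition p}, partEnergy ν lam p) :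
    ∀ᵐ x ∂lam, Tendsto (fun n => partFn ν lam (π n) x) atTop (𝓝 (ν.rnDeriv lam x).toReal) := by
  have := isFiniteMeasure_of_le lam hν
  have hsub := (martingale_partFn hν.absolutelyContinuous hπ hmono).submartingale
  have hbdd n : eLpNorm (partFn ν lam (π n)) 1 lam ≤ (lam univ).toNNReal := by
    refine (eLpNorm_le_of_ae_bound (ae_of_all _ (norm_partFn_le_one hν (hπ n)))).trans ?_
    simp [ENNReal.coe_toNNReal (measure_ne_top lam univ)]
  have hconv := hsub.ae_tendsto_limitProcess hbdd
  set g :=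
    Filtration.limitProcess (fun n => partFn ν lam (π n)) (partitionFiltration π hπ hmono) lam
  have hg_setIntegral (A : Set Ω) (hA : MeasurableSet A) : ∫ x in A, g x ∂lam = ν.real A :=
    tendsto_nhds_unique
      (tendsto_integral_of_dominated_convergence (fun _ => 1)
        (fun n => (measurable_partFn (hπ n)).aestronglyMeasurable) (integrable_const 1)
        (fun n => ae_of_all _ (norm_partFn_le_one hν (hπ n))) (ae_restrict_of_ae hconv))
      (tendsto_setIntegral_partFn hν hπ (tendsto_partEnergy hν hπ hmono hmax)
        (fun p hp => le_ciSup (bddAbove_partEnergy ν lam) ⟨p, hp⟩) hA)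
  have hg : g =ᵐ[lam] fun x => (ν.rnDeriv lam x).toReal :=
    ae_eq_of_forall_setIntegral_eq_of_sigmaFinite
      (fun _ _ _ => ((hsub.memLp_limitProcess hbdd).integrable le_rfl).integrableOn)
      (fun _ _ _ => Measure.integrable_toReal_rnDeriv.integrableOn) fun s hs _ => by
        rw [hg_setIntegral s hs, Measure.setIntegral_toReal_rnDeriv hν.absolutelyContinuous]
  filter_upwards [hconv, hg] with x hx hgx
  rwa [hgx] at hx

lemma ae_measure_ne_zero_of_mem (μ : Measure Ω) (p : Finset (Set Ω)) :
    ∀ᵐ x ∂μ, ∀ A ∈ p, x ∈ A → μ A ≠ 0 := by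
  refine (eventually_all_finset p).2 fun A _ => ?_
  by_cases h : μ A = 0
  · filter_upwards [measure_eq_zero_iff_ae_notMem.1 h] with x hx hxA using absurd hxA hx
  · exact ae_of_all _ fun _ _ => h

lemma partFn_eq_div_one_sub {μ ν : Measure Ω} [IsFiniteMeasure μ] [IsFiniteMeasure ν]
    (hp : IsFinitePartition p) {x : Ω} (hx : ∀ A ∈ p, x ∈ A → μ A ≠ 0) :
    partFn ν μ p x = partFn ν (μ + ν) p x / (1 - partFn ν (μ + ν) p x) := by
  obtain ⟨A, hA, hxA⟩ := hp.exists_mem x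
  have hμA : 0 < μ.real A := ENNReal.toReal_pos (hx A hA hxA) (measure_ne_top μ A)
  have hγA : 0 < μ.real A + ν.real A := by positivity
  rw [partFn_eq_of_mem hp hA hxA, partFn_eq_of_mem hp hA hxA, measureReal_add_apply,
    one_sub_div hγA.ne', add_sub_cancel_right, div_div_div_cancel_right₀ hγA.ne']

lemma ae_toReal_rnDeriv_add_eq_one (μ ν : Measure Ω) [IsFiniteMeasure μ] [IsFiniteMeasure ν] :
    ∀ᵐ x ∂(μ + ν), (μ.rnDeriv (μ + ν) x).toReal + (ν.rnDeriv (μ + ν) x).toReal = 1 := by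
  filter_upwards [Measure.rnDeriv_add' μ ν (μ + ν), (μ + ν).rnDeriv_self,
    Measure.rnDeriv_lt_top μ (μ + ν), Measure.rnDeriv_lt_top ν (μ + ν)] with x hadd hself hμ hν
  rw [← ENNReal.toReal_add hμ.ne hν.ne, ← Pi.add_apply, ← hadd, hself, ENNReal.toReal_one]

lemma ae_tendsto_partFn_of_ae_tendsto_partFn_add {μ ν : Measure Ω} [IsFiniteMeasure μ]
    [IsFiniteMeasure ν] {π : ℕ → Finset (Set Ω)} (hπ : ∀ n, IsFinitePartition (π n))
    (h : ∀ᵐ x ∂(μ + ν),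
      Tendsto (fun n => partFn ν (μ + ν) (π n) x) atTop (𝓝 (ν.rnDeriv (μ + ν) x).toReal)) :
    ∀ᵐ x ∂μ, Tendsto (fun n => partFn ν μ (π n) x) atTop (𝓝 (ν.rnDeriv μ x).toReal) := by
  have hμ : μ ≪ μ + ν := Measure.AbsolutelyContinuous.rfl.add_right ν
  have hν : ν ≪ μ + ν := Measure.AbsolutelyContinuous.rfl.add_right' μ
  filter_upwards [hμ.ae_le h, hμ.ae_le (ae_toReal_rnDeriv_add_eq_one μ ν),
    Measure.rnDeriv_eq_div hν hμ, Measure.rnDeriv_pos hμ,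
    hμ.ae_le (Measure.rnDeriv_lt_top μ (μ + ν)),
    ae_all_iff.2 fun n => ae_measure_ne_zero_of_mem μ (π n)] with x hx hsum hdiv hpos htop hcells
  have hμx : (μ.rnDeriv (μ + ν) x).toReal = 1 - (ν.rnDeriv (μ + ν) x).toReal :=
    eq_sub_of_add_eq hsum
  have hne : 1 - (ν.rnDeriv (μ + ν) x).toReal ≠ 0 :=
    hμx ▸ (ENNReal.toReal_pos hpos.ne' htop.ne).ne'
  rw [hdiv, ENNReal.toReal_div, hμx]
  exact (hx.div (tendsto_const_nhds.sub hx) hne).congr fun n =>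
    (partFn_eq_div_one_sub (hπ n) (hcells n)).symm

end

/-- **Differentiation of measures on an arbitrary measurable space.** Let `μ, ν` be finite
measures on `(Ω, F)` and `γ := μ + ν`. If `(π_n)_n` is an increasing (refining) sequence of
finite measurable partitions of `Ω` that asymptotically maximizes
`π ↦ ∫ e^{-f_π(γ)} dγ` over all finite measurable partitions, then
`f_{π_n}(μ) → dν^a/dμ` `μ`-a.e. -/
theorem stmt4 {Ω : Type*} [MeasurableSpace Ω] (μ ν : Measure Ω)
    [IsFiniteMeasure μ] [IsFiniteMeasure ν]
    (π : ℕ → Finset (Set Ω)) (hπ : ∀ n, IsFinitePartition (π n))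
    (hmono : ∀ n, Refines (π (n + 1)) (π n))
    (hmax : (⨆ n, ∫ x, Real.exp (-(partFn ν (μ + ν) (π n) x)) ∂(μ + ν)) =
      ⨆ p : {p : Finset (Set Ω) // IsFinitePartition p},
        ∫ x, Real.exp (-(partFn ν (μ + ν) p.1 x)) ∂(μ + ν)) :
    ∀ᵐ x ∂μ, Tendsto (fun n => partFn ν μ (π n) x) atTop (𝓝 ((ν.rnDeriv μ x).toReal)) :=
  ae_tendsto_partFn_of_ae_tendsto_partFn_add hπ
    (ae_tendsto_partFn_rnDeriv (Measure.le_add_left le_rfl) hπ hmono hmax)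
end

section
/- Let μ be a finite positive measure on (Ω, F) and let (f_n)_{n∈ℕ} be a sequence bounded in L²(μ). Then there exists a sequence (g_n)_{n∈ℕ} with g_n a (finite) convex combination of {f_k : k ≥ n} for every n, such that (g_n) converges both μ-a.e. and in L²(μ). -/
open MeasureTheory Filter
open scoped ENNReal Topology

/-! The sets `P n = conv {f_k : k ≥ n}` decrease and are convex in the Hilbert space `L²(μ)`, so
the distances `d n` from `0` to `P n` increase to a finite limit. By the parallelogram law two
points of `P m` with norms close to `d m` are close to each other; hence almost-minimisers
`u n ∈ P n` form a Cauchy sequence. Its `L²`-limit is an a.e. limit along a subsequence, and a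
subsequence of a forward convex combination is again one. -/

section Hilbert

variable {E : Type*} [NormedAddCommGroup E] [InnerProductSpace ℝ E]

theorem norm_sub_sq_le_of_mem_convex {K : Set E} (hK : Convex ℝ K) {d : ℝ} (hd₀ : 0 ≤ d)
    (hd : ∀ z ∈ K, d ≤ ‖z‖) {x y : E} (hx : x ∈ K) (hy : y ∈ K) :
    ‖x - y‖ ^ 2 ≤ 2 * ‖x‖ ^ 2 + 2 * ‖y‖ ^ 2 - 4 * d ^ 2 := by
  have hmid : (2⁻¹ : ℝ) • x + (2⁻¹ : ℝ) • y ∈ K :=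
    hK hx hy (by norm_num) (by norm_num) (by norm_num)
  have hsum : 2 * d ≤ ‖x + y‖ := by
    have := hd _ hmid
    rw [← smul_add, norm_smul, norm_inv, Real.norm_two] at this
    linarith
  have hpar := parallelogram_law_with_norm ℝ x y
  nlinarith

theorem exists_cauchySeq_mem_of_antitone_convex {P : ℕ → Set E} (hP : Antitone P)
    (hconv : ∀ n, Convex ℝ (P n)) {C : ℝ} (hC : ∀ n, ∃ x ∈ P n, ‖x‖ ≤ C) :
    ∃ x : ℕ → E, (∀ n, x n ∈ P n) ∧ CauchySeq x := by
  set d : ℕ → ℝ := fun n => Metric.infDist 0 (P n)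
  have hne (n : ℕ) : (P n).Nonempty := let ⟨x, hx, _⟩ := hC n; ⟨x, hx⟩
  have hd_le (n : ℕ) {z : E} (hz : z ∈ P n) : d n ≤ ‖z‖ := by
    simpa using Metric.infDist_le_dist_of_mem (x := 0) hz
  have hd_mono : Monotone d := fun m n hmn =>
    Metric.infDist_le_infDist_of_subset (hP hmn) (hne n)
  obtain ⟨D, hD⟩ : ∃ D, Tendsto d atTop (𝓝 D) := by
    refine ⟨_, tendsto_atTop_ciSup hd_mono ⟨C, ?_⟩⟩
    rintro _ ⟨n, rfl⟩
    obtain ⟨x, hx, hxC⟩ := hC n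
    exact (hd_le n hx).trans hxC
  have hdD : ∀ n, d n ≤ D := hd_mono.ge_of_tendsto hD
  set ε : ℕ → ℝ := fun n => 1 / ((n : ℝ) + 1)
  have hε : Tendsto ε atTop (𝓝 0) := tendsto_one_div_add_atTop_nhds_zero_nat
  have hε_anti : Antitone ε := fun m n hmn => Nat.one_div_le_one_div hmn
  have hnear (n : ℕ) : ∃ x ∈ P n, ‖x‖ < d n + ε n := by
    have hε_pos : 0 < ε n := by positivity
    simpa using (Metric.infDist_lt_iff (hne n)).mp (lt_add_of_pos_right (d n) hε_pos)
  choose x hxP hx_lt using hnear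
  refine ⟨x, hxP, cauchySeq_of_le_tendsto_0' (fun m => √(4 * ((D + ε m) ^ 2 - d m ^ 2))) ?_ ?_⟩
  · intro m n hmn
    have hxm : ‖x m‖ ≤ D + ε m := (hx_lt m).le.trans (by linarith [hdD m])
    have hxn : ‖x n‖ ≤ D + ε m := (hx_lt n).le.trans (by linarith [hdD n, hε_anti hmn])
    have key := norm_sub_sq_le_of_mem_convex (hconv m) Metric.infDist_nonneg (fun z => hd_le m)
      (hxP m) (hP hmn (hxP n))
    rw [dist_eq_norm]
    refine Real.le_sqrt_of_sq_le ?_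
    nlinarith [norm_nonneg (x m), norm_nonneg (x n)]
  · have := ((((tendsto_const_nhds (x := D)).add hε).pow 2).sub (hD.pow 2)).const_mul 4
    simpa using this.sqrt

end Hilbert

theorem exists_finset_sum_eq_of_mem_convexHull_image {R E ι : Type*} [Field R] [LinearOrder R]
    [IsStrictOrderedRing R] [AddCommGroup E] [Module R E] {v : ι → E} {S : Set ι} {x : E}
    (hx : x ∈ convexHull R (v '' S)) :
    ∃ (t : Finset ι) (w : ι → R), (∀ i ∈ t, i ∈ S) ∧ (∀ i ∈ t, 0 ≤ w i) ∧
      ∑ i ∈ t, w i = 1 ∧ ∑ i ∈ t, w i • v i = x := by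
  classical
  rw [Set.image_eq_range, convexHull_range_eq_exists_affineCombination] at hx
  obtain ⟨s, w, hw₀, hw₁, rfl⟩ := hx
  refine ⟨s.map (Function.Embedding.subtype _), fun i => if h : i ∈ S then w ⟨i, h⟩ else 0,
    ?_, ?_, ?_, ?_⟩
  · simp only [Finset.mem_map, Function.Embedding.coe_subtype]
    rintro _ ⟨i, -, rfl⟩
    exact i.2
  · simp only [Finset.mem_map, Function.Embedding.coe_subtype]
    rintro _ ⟨i, hi, rfl⟩
    simpa using hw₀ i hi
  · simpa using hw₁
  · simp [Finset.affineCombination_eq_linear_combination s _ w hw₁]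

section Lp

variable {α : Type*} [MeasurableSpace α] {μ : Measure α} {p : ℝ≥0∞}

theorem coeFn_finsetSum_smul_toLp {ι : Type*} {f : ι → α → ℝ} (hf : ∀ i, MemLp (f i) p μ)
    (s : Finset ι) (a : ι → ℝ) :
    ⇑(∑ i ∈ s, a i • (hf i).toLp (f i)) =ᵐ[μ] fun x => ∑ i ∈ s, a i * f i x := by
  have hterm : ∀ᵐ x ∂μ, ∀ i ∈ s, (a i • (hf i).toLp (f i)) x = a i * f i x := by
    refine (s.eventually_all).2 fun i _ => ?_
    filter_upwards [Lp.coeFn_smul (a i) ((hf i).toLp (f i)), (hf i).coeFn_toLp] with x h₁ h₂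
    rw [h₁, Pi.smul_apply, h₂, smul_eq_mul]
  filter_upwards [Lp.coeFn_fun_finsetSum s fun i => a i • (hf i).toLp (f i), hterm] with x h₁ h₂
  rw [h₁]
  exact Finset.sum_congr rfl h₂

theorem Lp.exists_subseq_tendsto_ae_of_tendsto {E : Type*} [NormedAddCommGroup E] [Fact (1 ≤ p)]
    {u : ℕ → Lp E p μ} {v : Lp E p μ} (huv : Tendsto u atTop (𝓝 v)) {g : ℕ → α → E}
    (hg : ∀ n, g n =ᵐ[μ] u n) :
    ∃ ns : ℕ → ℕ, StrictMono ns ∧ (∀ᵐ x ∂μ, Tendsto (fun n => g (ns n) x) atTop (𝓝 (v x))) ∧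
      Tendsto (fun n => eLpNorm (fun x => g (ns n) x - v x) p μ) atTop (𝓝 0) := by
  obtain ⟨ns, hns, hae⟩ := (tendstoInMeasure_of_tendsto_Lp huv).exists_seq_tendsto_ae
  refine ⟨ns, hns, ?_, ?_⟩
  · filter_upwards [hae, ae_all_iff.2 fun n => hg n] with x hx hgx
    simpa only [hgx] using hx
  · refine ((Lp.tendsto_Lp_iff_tendsto_eLpNorm' _ _).mp (huv.comp hns.tendsto_atTop)).congr
      fun n => eLpNorm_congr_ae ?_
    filter_upwards [hg (ns n)] with x hx
    simp [hx]

end Lp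

theorem stmt9_general {Ω : Type*} [MeasurableSpace Ω] (μ : Measure Ω)
    (f : ℕ → Ω → ℝ) (hf : ∀ n, MemLp (f n) 2 μ)
    (hbdd : ∃ C : ℝ≥0∞, C ≠ ∞ ∧ ∀ n, eLpNorm (f n) 2 μ ≤ C) :
    ∃ g : ℕ → Ω → ℝ,
      (∀ n, ∃ (s : Finset ℕ) (a : ℕ → ℝ), (∀ k ∈ s, n ≤ k) ∧ (∀ k ∈ s, 0 ≤ a k) ∧
        (∑ k ∈ s, a k) = 1 ∧ g n = fun x => ∑ k ∈ s, a k * f k x) ∧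
      ∃ h : Ω → ℝ, MemLp h 2 μ ∧
        (∀ᵐ x ∂μ, Tendsto (fun n => g n x) atTop (𝓝 (h x))) ∧
        Tendsto (fun n => eLpNorm (fun x => g n x - h x) 2 μ) atTop (𝓝 0) := by
  obtain ⟨C, hC, hfC⟩ := hbdd
  set F : ℕ → Lp ℝ 2 μ := fun n => (hf n).toLp (f n)
  obtain ⟨u, huP, hu⟩ := exists_cauchySeq_mem_of_antitone_convex (C := C.toReal)
    (P := fun n => convexHull ℝ (F '' Set.Ici n))
    (fun m n hmn => convexHull_mono (Set.image_mono (Set.Ici_subset_Ici.2 hmn)))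
    (fun n => convex_convexHull ℝ _)
    (fun n => ⟨F n, subset_convexHull ℝ _ ⟨n, Set.self_mem_Ici, rfl⟩,
      by simpa [F, Lp.norm_toLp] using ENNReal.toReal_mono hC (hfC n)⟩)
  obtain ⟨v, huv⟩ := cauchySeq_tendsto_of_complete hu
  choose t a ht ha hsum hut using fun n => exists_finset_sum_eq_of_mem_convexHull_image (huP n)
  obtain ⟨ns, hns, hae, hL2⟩ := Lp.exists_subseq_tendsto_ae_of_tendsto huv
    (g := fun n x => ∑ k ∈ t n, a n k * f k x)
    (fun n => hut n ▸ (coeFn_finsetSum_smul_toLp hf (t n) (a n)).symm)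
  exact ⟨_, fun n => ⟨t (ns n), a (ns n), fun k hk => hns.le_apply.trans (ht _ k hk),
    ha (ns n), hsum (ns n), rfl⟩, v, Lp.memLp v, hae, hL2⟩

/-- **Convergent forward convex combinations of an `L²`-bounded sequence.** If `μ` is a finite
measure and `(f_n)_n` is bounded in `L²(μ)`, then there is a forward convex combination
`(g_n)_n` of `(f_n)_n` (i.e. each `g_n` is a finite convex combination of `{f_k : k ≥ n}`)
converging both `μ`-a.e. and in `L²(μ)`. -/
theorem stmt9 {Ω : Type*} [MeasurableSpace Ω] (μ : Measure Ω) [IsFiniteMeasure μ]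
    (f : ℕ → Ω → ℝ) (hf : ∀ n, MemLp (f n) 2 μ)
    (hbdd : ∃ C : ℝ≥0∞, C ≠ ∞ ∧ ∀ n, eLpNorm (f n) 2 μ ≤ C) :
    ∃ g : ℕ → Ω → ℝ,
      (∀ n, ∃ (s : Finset ℕ) (a : ℕ → ℝ), (∀ k ∈ s, n ≤ k) ∧ (∀ k ∈ s, 0 ≤ a k) ∧
        (∑ k ∈ s, a k) = 1 ∧ g n = fun x => ∑ k ∈ s, a k * f k x) ∧
      ∃ h : Ω → ℝ, MemLp h 2 μ ∧
        (∀ᵐ x ∂μ, Tendsto (fun n => g n x) atTop (𝓝 (h x))) ∧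
        Tendsto (fun n => eLpNorm (fun x => g n x - h x) 2 μ) atTop (𝓝 0) :=
  stmt9_general μ f hf hbdd
end

section
/- Let μ be a finite positive measure on (Ω, F), let (I, ≤) be a directed partially ordered set, let (F_i)_{i∈I} be a family of sub-σ-algebras of F with F_i ⊆ F_j whenever i ≤ j, and let (M_i)_{i∈I} be a uniformly integrable family with M_i ∈ L¹(μ) F_i-measurable and E^μ[M_j | F_i] = M_i whenever i ≤ j. Then the martingale is closed: there exists M_∞ ∈ L¹(μ) such that E^μ[M_∞ | F_i] = M_i for all i ∈ I. -/
/-!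
Along an increasing sequence of indices the family is a uniformly integrable discrete-time
martingale, so it converges in `L¹`. This forces the whole net `(M_i)` to be Cauchy in `L¹`:
otherwise one builds an increasing sequence of indices along which consecutive increments stay
`ε` apart. By completeness of `L¹` the net has a limit `M_∞`, and since conditional expectation
is an `L¹`-contraction, `E[M_∞ | F_i] = lim_j E[M_j | F_i] = M_i`.
-/

open MeasureTheory Set Filter Topology

theorem cauchySeq_of_forall_monotone_cauchySeq_comp {I X : Type*} [Preorder I] [Nonempty I]
    [IsDirectedOrder I] [PseudoMetricSpace X] {f : I → X}
    (h : ∀ φ : ℕ → I, Monotone φ → CauchySeq (f ∘ φ)) : CauchySeq f := by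
  refine Metric.cauchy_iff.2 ⟨atTop_neBot.map f, fun ε hε => ?_⟩
  suffices ∃ i, ∀ j, i ≤ j → dist (f j) (f i) < ε / 2 by
    obtain ⟨i, hi⟩ := this
    refine ⟨f '' Ici i, image_mem_map (Ici_mem_atTop i), ?_⟩
    rintro _ ⟨j, hj, rfl⟩ _ ⟨k, hk, rfl⟩
    linarith [dist_triangle_right (f j) (f k) (f i), hi j hj, hi k hk]
  by_contra! hbad
  choose next hle_next hfar using hbad
  have hφ : Monotone fun n => next^[n] (Classical.arbitrary I) :=
    monotone_nat_of_le_succ fun n => by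
      rw [Function.iterate_succ_apply']; exact hle_next _
  obtain ⟨N, hN⟩ := Metric.cauchySeq_iff'.1 (h _ hφ) (ε / 2) (half_pos hε)
  have hclose := hN (N + 1) N.le_succ
  simp only [Function.comp_apply, Function.iterate_succ_apply'] at hclose
  exact (hfar _).not_gt hclose

theorem exists_tendsto_eLpNorm_of_forall_monotone {α I E : Type*} {m0 : MeasurableSpace α}
    {μ : Measure α} [Preorder I] [Nonempty I] [IsDirectedOrder I] [NormedAddCommGroup E]
    [CompleteSpace E] {p : ENNReal} [Fact (1 ≤ p)] {f : I → α → E} (hf : ∀ i, MemLp (f i) p μ)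
    (h : ∀ φ : ℕ → I, Monotone φ → ∃ g, MemLp g p μ ∧
      Tendsto (fun n => eLpNorm (f (φ n) - g) p μ) atTop (𝓝 0)) :
    ∃ g, MemLp g p μ ∧ Tendsto (fun i => eLpNorm (f i - g) p μ) atTop (𝓝 0) := by
  have hcauchy : CauchySeq fun i => (hf i).toLp (f i) :=
    cauchySeq_of_forall_monotone_cauchySeq_comp fun φ hφ => by
      obtain ⟨g, hg, hlim⟩ := h φ hφ
      exact ((Lp.tendsto_Lp_iff_tendsto_eLpNorm'' _ (fun n => hf (φ n)) g hg).2 hlim).cauchySeq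
  obtain ⟨g, hg⟩ := cauchySeq_tendsto_of_complete hcauchy
  rw [← Lp.toLp_coeFn g (Lp.memLp g), Lp.tendsto_Lp_iff_tendsto_eLpNorm''] at hg
  exact ⟨g, Lp.memLp g, hg⟩

theorem MeasureTheory.UniformIntegrable.comp {α ι κ β : Type*} {m0 : MeasurableSpace α}
    {μ : Measure α} [NormedAddCommGroup β] {p : ENNReal} {f : ι → α → β}
    (hf : UniformIntegrable f p μ) (φ : κ → ι) : UniformIntegrable (f ∘ φ) p μ := by
  obtain ⟨hmeas, hunif, C, hC⟩ := hf
  refine ⟨fun n => hmeas _, fun ε hε => ?_, C, fun n => hC _⟩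
  obtain ⟨δ, hδ, h⟩ := hunif hε
  exact ⟨δ, hδ, fun n => h (φ n)⟩

theorem uniformIntegrable_of_forall_setIntegral_abs_lt {α ι : Type*} {m0 : MeasurableSpace α}
    {μ : Measure α} [IsFiniteMeasure μ] {f : ι → α → ℝ} (hmeas : ∀ i, Measurable (f i))
    (hint : ∀ i, Integrable (f i) μ)
    (h : ∀ ε > (0 : ℝ), ∃ k : ℝ, ∀ i, ∫ x in {y | k ≤ |f i y|}, |f i x| ∂μ < ε) :
    UniformIntegrable f 1 μ := by
  refine uniformIntegrable_of le_rfl ENNReal.one_ne_top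
    (fun i => (hint i).aestronglyMeasurable) fun ε hε => ?_
  obtain ⟨k, hkε⟩ := h ε hε
  refine ⟨k.toNNReal, fun i => ?_⟩
  have hset : {x | k.toNNReal ≤ ‖f i x‖₊} = {y | k ≤ |f i y|} := by
    ext x
    simp [Real.toNNReal_le_iff_le_coe]
  have hmeas_set : MeasurableSet {y | k ≤ |f i y|} :=
    measurableSet_le measurable_const (hmeas i).abs
  rw [hset, eLpNorm_indicator_eq_eLpNorm_restrict hmeas_set,
    eLpNorm_one_eq_lintegral_enorm, ← ofReal_integral_norm_eq_lintegral_enorm (hint i).restrict]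
  exact ENNReal.ofReal_le_ofReal (hkε i).le

theorem exists_tendsto_eLpNorm_one_comp_of_monotone {Ω I : Type*} {m0 : MeasurableSpace Ω}
    {μ : Measure Ω} [IsFiniteMeasure μ] [Preorder I] {ℱ : I → MeasurableSpace Ω}
    (hle : ∀ i, ℱ i ≤ m0) (hmono : Monotone ℱ) {M : I → Ω → ℝ}
    (hmeas : ∀ i, StronglyMeasurable[ℱ i] (M i))
    (hmart : ∀ i j : I, i ≤ j → μ[M j | ℱ i] =ᵐ[μ] M i) (hUI : UniformIntegrable M 1 μ)
    {φ : ℕ → I} (hφ : Monotone φ) :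
    ∃ L, MemLp L 1 μ ∧ Tendsto (fun n => eLpNorm (M (φ n) - L) 1 μ) atTop (𝓝 0) := by
  let 𝒢 : Filtration ℕ m0 := ⟨fun n => ℱ (φ n), hmono.comp hφ, fun n => hle _⟩
  have hmart𝒢 : Martingale (M ∘ φ) 𝒢 μ :=
    ⟨fun n => hmeas (φ n), fun n m hnm => hmart _ _ (hφ hnm)⟩
  have hUI𝒢 := hUI.comp φ
  obtain ⟨R, hR⟩ := hUI𝒢.2.2
  exact ⟨𝒢.limitProcess (M ∘ φ) μ, Filtration.memLp_limitProcess_of_eLpNorm_bdd hUI𝒢.1 hR,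
    hmart𝒢.submartingale.tendsto_eLpNorm_one_limitProcess hUI𝒢⟩

theorem condExp_ae_eq_of_tendsto_eLpNorm {α ι E : Type*} {m m0 : MeasurableSpace α}
    {μ : Measure α} [NormedAddCommGroup E] [NormedSpace ℝ E] [CompleteSpace E] {p : ENNReal}
    (hp : 1 ≤ p) {l : Filter ι} [l.NeBot] {f : ι → α → E} {g h : α → E}
    (hf : ∀ i, Integrable (f i) μ) (hg : Integrable g μ)
    (hlim : Tendsto (fun i => eLpNorm (f i - g) p μ) l (𝓝 0))
    (hcond : ∀ᶠ i in l, μ[f i | m] =ᵐ[μ] h) : μ[g | m] =ᵐ[μ] h := by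
  have hbound : ∀ᶠ i in l, eLpNorm (μ[g | m] - h) p μ ≤ eLpNorm (f i - g) p μ := by
    filter_upwards [hcond] with i hi
    calc eLpNorm (μ[g | m] - h) p μ = eLpNorm (μ[g - f i | m]) p μ := by
          refine eLpNorm_congr_ae ?_
          filter_upwards [hi, condExp_sub hg (hf i) m] with x hx hsub
          simp [hsub, hx]
      _ ≤ eLpNorm (g - f i) p μ := eLpNorm_condExp_le_eLpNorm _ hp
      _ = eLpNorm (f i - g) p μ := eLpNorm_sub_comm _ _ _ _
  have hzero : eLpNorm (μ[g | m] - h) p μ = 0 :=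
    le_antisymm (ge_of_tendsto hlim hbound) zero_le
  obtain ⟨i, hi⟩ := hcond.exists
  have hh : Integrable h μ := integrable_condExp.congr hi
  filter_upwards [(eLpNorm_eq_zero_iff (integrable_condExp.sub hh).aestronglyMeasurable
    (one_pos.trans_le hp).ne').1 hzero] with x hx
  simpa [sub_eq_zero] using hx

/-- **Uniformly integrable martingales indexed by a directed set are closed.** Let `μ` be a
finite measure on `(Ω, F)`, `(I, ≤)` a directed partially ordered set, `(F_i)_{i ∈ I}` a
monotone family of sub-σ-algebras of `F`, and `(M_i)_{i ∈ I}` a uniformly integrable family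
with each `M_i ∈ L¹(μ)` `F_i`-measurable and `E^μ[M_j | F_i] = M_i` for `i ≤ j`. Then there
exists `M_∞ ∈ L¹(μ)` with `E^μ[M_∞ | F_i] = M_i` for all `i ∈ I`. -/
theorem stmt18 {Ω : Type*} {F : MeasurableSpace Ω} (μ : Measure Ω) [IsFiniteMeasure μ]
    {I : Type*} [PartialOrder I]
    (hdir : ∀ i j : I, ∃ k : I, i ≤ k ∧ j ≤ k)
    (ℱ : I → MeasurableSpace Ω) (hle : ∀ i, ℱ i ≤ F)
    (hmono : ∀ i j : I, i ≤ j → ℱ i ≤ ℱ j)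
    (M : I → Ω → ℝ) (hint : ∀ i, Integrable (M i) μ)
    (hmeas : ∀ i, Measurable[ℱ i] (M i))
    (hmart : ∀ i j : I, i ≤ j → μ[M j | ℱ i] =ᵐ[μ] M i)
    (hui : ∀ ε > (0 : ℝ), ∃ k > (0 : ℝ), ∀ i : I,
      ∫ x in {y | k ≤ |M i y|}, |M i x| ∂μ < ε) :
    ∃ Minf : Ω → ℝ, Integrable Minf μ ∧ ∀ i : I, μ[Minf | ℱ i] =ᵐ[μ] M i := by
  rcases isEmpty_or_nonempty I with _ | _
  · exact ⟨0, integrable_zero _ _ _, fun i => isEmptyElim i⟩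
  have : IsDirectedOrder I := ⟨hdir⟩
  have hUI : UniformIntegrable M 1 μ := uniformIntegrable_of_forall_setIntegral_abs_lt
    (fun i => (hmeas i).mono (hle i) le_rfl) hint fun ε hε => (hui ε hε).imp fun _ hk => hk.2
  obtain ⟨L, hL, hlim⟩ := exists_tendsto_eLpNorm_of_forall_monotone
    (fun i => memLp_one_iff_integrable.2 (hint i)) fun φ hφ =>
      exists_tendsto_eLpNorm_one_comp_of_monotone hle (fun i j => hmono i j)
        (fun i => (hmeas i).stronglyMeasurable) hmart hUI hφ
  exact ⟨L, hL.integrable le_rfl, fun i => condExp_ae_eq_of_tendsto_eLpNorm le_rfl hint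
    (hL.integrable le_rfl) hlim ((eventually_ge_atTop i).mono fun j hij => hmart i j hij)⟩
end
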